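/- Suppose D is a nonprincipal ultrafilter on an infinite cardinal κ, λ is a regular cardinal with λ > κ, and the following holds: for every function c from the 2-element subsets of λ into D, there exist a finite set u ⊆ D and a set S ⊆ λ of cardinality λ such that whenever α < β are both in S, there are a natural number n and ordinals α = γ₀ < γ₁ < ⋯ < γ_n = β with c{γ_l, γ_{l+1}} ∈ u for all l < n. Then for every λ⁺-saturated dense linear order J without endpoints, no pair of sequences of functions from κ to J represents a (λ, λ)-cut of J^κ/D. -/

import Mathlib

/-!
Colour a pair `a < b` of `λ` by the set of coordinates on which the cut
interlocks, `f a < f b < g b < g a`. For fixed `i` interlocking is transitive, so on the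
intersection `A ∈ D` of the finitely many colours supplied by the chain condition, any two
points of the large set `S` interlock. As `S` is unbounded in `λ`, this puts every `f a i`
below every `g b i` for `a, b ∈ S`, and `λ⁺`-saturation of `J` provides a point `t i` between
them. Then `t` fills the cut, since `f` and `g` restricted to `S` are cofinal in it. -/

open Cardinal Set

/-- `f <_D g` : the set of coordinates where `f i < g i` belongs to the ultrafilter `D`. -/
def ltD {ι J : Type} [LinearOrder J] (D : Ultrafilter ι) (f g : ι → J) : Prop :=
  {i | f i < g i} ∈ D

/-- An ultrafilter is nonprincipal iff it contains the complement of every singleton. -/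
def Nonprincipal {ι : Type} (D : Ultrafilter ι) : Prop :=
  ∀ i : ι, ({i}ᶜ : Set ι) ∈ D

/-- `μ`-completeness: any intersection of fewer than `μ` members of `D` belongs to `D`. -/
def IsCompleteUF (μ : Cardinal) {ι : Type} (D : Ultrafilter ι) : Prop :=
  ∀ s : Set (Set ι), #s < μ → (∀ A ∈ s, A ∈ D) → ⋂₀ s ∈ D

/-- A uniform ultrafilter: every member has full cardinality. -/
def IsUniformUF {ι : Type} (D : Ultrafilter ι) : Prop :=
  ∀ A ∈ D, #A = #ι

/-- The sequences `f` (indexed by `T₁`) and `g` (indexed by `T₂`) represent a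
`(T₁, T₂)`-cut of the ultrapower `J^ι/D`: `f` is `<_D`-increasing, `g` is `<_D`-decreasing,
every `f a` is `<_D`-below every `g b`, and no element fills the cut. -/
def RepCut {ι J : Type} [LinearOrder J] {T₁ T₂ : Type} [LinearOrder T₁] [LinearOrder T₂]
    (D : Ultrafilter ι) (f : T₁ → ι → J) (g : T₂ → ι → J) : Prop :=
  (∀ a b : T₁, a < b → ltD D (f a) (f b)) ∧
  (∀ a b : T₂, a < b → ltD D (g b) (g a)) ∧
  (∀ (a : T₁) (b : T₂), ltD D (f a) (g b)) ∧
  ¬∃ h : ι → J, (∀ a : T₁, ltD D (f a) h) ∧ ∀ b : T₂, ltD D h (g b)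

/-- `τ⁺`-saturation of a dense linear order: any two sets of size `≤ τ`, one entirely
below the other, can be separated by a point. -/
def SatPlus (τ : Cardinal) (J : Type) [LinearOrder J] : Prop :=
  ∀ A B : Set J, #A ≤ τ → #B ≤ τ → (∀ a ∈ A, ∀ b ∈ B, a < b) →
    ∃ t : J, (∀ a ∈ A, a < t) ∧ ∀ b ∈ B, t < b

theorem Relation.reflTransGen_of_fin_chain {α : Type*} {r : α → α → Prop} {n : ℕ}
    {γ : Fin (n + 1) → α} (hγ : ∀ l : Fin n, r (γ l.castSucc) (γ l.succ)) (k : Fin (n + 1)) :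
    Relation.ReflTransGen r (γ 0) (γ k) := by
  induction k using Fin.induction with
  | zero => exact .refl
  | succ l ih => exact ih.tail (hγ l)

theorem rel_of_fin_chain {α : Type*} {r : α → α → Prop} [IsTrans α r] {a b : α} (hab : a ≠ b)
    {n : ℕ} {γ : Fin (n + 1) → α} (h0 : γ 0 = a) (hlast : γ (Fin.last n) = b)
    (hγ : ∀ l : Fin n, r (γ l.castSucc) (γ l.succ)) : r a b := by
  have hgen := Relation.reflTransGen_of_fin_chain hγ (Fin.last n)
  rw [h0, hlast, Relation.reflTransGen_iff_eq_or_transGen] at hgen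
  rw [← Relation.transGen_eq_self (r := r)]
  exact hgen.resolve_left hab.symm

theorem not_bddAbove_of_mk_eq {c : Cardinal} (hc : ℵ₀ ≤ c) {S : Set c.ord.ToType}
    (hS : #S = c) : ¬BddAbove S := by
  rintro ⟨a, ha⟩
  have hIic : #(Iic a) < c := by
    rw [← Iio_insert]
    have hIio : #(Iio a) < c := by simpa using mk_Iio_lt a
    exact mk_insert_le.trans_lt <| add_lt_of_lt hc hIio (one_lt_aleph0.trans_le hc)
  exact (hS.symm.le.trans (mk_le_mk_of_subset ha)).not_gt hIic

section Interlocked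

variable {T J : Type*} [Preorder J]

def Interlocked (f g : T → J) (a b : T) : Prop :=
  f a < f b ∧ f b < g b ∧ g b < g a

instance (f g : T → J) : IsTrans T (Interlocked f g) :=
  ⟨fun _ _ _ ⟨hab₁, _, hab₃⟩ ⟨hbc₁, hbc₂, hbc₃⟩ => ⟨hab₁.trans hbc₁, hbc₂, hbc₃.trans hab₃⟩⟩

theorem lt_of_interlocked_of_not_bddAbove [LinearOrder T] {f g : T → J} {S : Set T}
    (hS : ¬BddAbove S) (h : ∀ a ∈ S, ∀ b ∈ S, a < b → Interlocked f g a b) {a b : T}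
    (ha : a ∈ S) (hb : b ∈ S) : f a < g b := by
  obtain ⟨c, hc, hlt⟩ := not_bddAbove_iff.mp hS (max a b)
  obtain ⟨hac, -, -⟩ := h a ha c hc (lt_of_le_of_lt (le_max_left a b) hlt)
  obtain ⟨-, hcc, hcb⟩ := h b hb c hc (lt_of_le_of_lt (le_max_right a b) hlt)
  exact hac.trans (hcc.trans hcb)

end Interlocked

theorem SatPlus.nonempty {τ : Cardinal} {J : Type} [LinearOrder J] (hsat : SatPlus τ J) :
    Nonempty J :=
  let ⟨t, _⟩ := hsat ∅ ∅ (by simp) (by simp) (by simp)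
  ⟨t⟩

theorem SatPlus.exists_between_image {τ : Cardinal} {J T₁ T₂ : Type} [LinearOrder J]
    (hsat : SatPlus τ J) {S₁ : Set T₁} {S₂ : Set T₂} (h₁ : #S₁ ≤ τ) (h₂ : #S₂ ≤ τ)
    {f : T₁ → J} {g : T₂ → J} (hfg : ∀ a ∈ S₁, ∀ b ∈ S₂, f a < g b) :
    ∃ t : J, (∀ a ∈ S₁, f a < t) ∧ ∀ b ∈ S₂, t < g b := by
  obtain ⟨t, hft, htg⟩ := hsat (f '' S₁) (g '' S₂) (mk_image_le.trans h₁) (mk_image_le.trans h₂)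
    (by rintro _ ⟨a, ha, rfl⟩ _ ⟨b, hb, rfl⟩; exact hfg a ha b hb)
  exact ⟨t, fun a ha => hft _ (mem_image_of_mem f ha), fun b hb => htg _ (mem_image_of_mem g hb)⟩

section Ultrapower

variable {ι J : Type} [LinearOrder J] {D : Ultrafilter ι}

theorem ltD_trans {f g h : ι → J} (hfg : ltD D f g) (hgh : ltD D g h) : ltD D f h :=
  Filter.mem_of_superset (Filter.inter_mem hfg hgh) fun _ hi => hi.1.trans hi.2

theorem ltD_of_forall_mem {A : Set ι} (hA : A ∈ D) {f g : ι → J} (h : ∀ i ∈ A, f i < g i) :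
    ltD D f g :=
  Filter.mem_of_superset hA h

variable {T₁ T₂ : Type} [LinearOrder T₁] [LinearOrder T₂]

theorem RepCut.setOf_interlocked_mem {T : Type} [LinearOrder T] {f g : T → ι → J}
    (hcut : RepCut D f g) {a b : T} (hab : a < b) :
    {i | Interlocked (f · i) (g · i) a b} ∈ D :=
  Filter.mem_of_superset (Filter.inter_mem (hcut.1 a b hab)
    (Filter.inter_mem (hcut.2.2.1 b b) (hcut.2.1 a b hab))) fun _ hi => hi

theorem RepCut.not_exists_between_of_not_bddAbove {f : T₁ → ι → J} {g : T₂ → ι → J}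
    (hcut : RepCut D f g) {S₁ : Set T₁} {S₂ : Set T₂} (hS₁ : ¬BddAbove S₁)
    (hS₂ : ¬BddAbove S₂) : ¬∃ h : ι → J, (∀ a ∈ S₁, ltD D (f a) h) ∧ ∀ b ∈ S₂, ltD D h (g b) := by
  rintro ⟨h, hfh, hhg⟩
  refine hcut.2.2.2 ⟨h, fun a => ?_, fun b => ?_⟩
  · obtain ⟨a', ha', hlt⟩ := not_bddAbove_iff.mp hS₁ a
    exact ltD_trans (hcut.1 a a' hlt) (hfh a' ha')
  · obtain ⟨b', hb', hlt⟩ := not_bddAbove_iff.mp hS₂ b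
    exact ltD_trans (hhg b' hb') (hcut.2.1 b b' hlt)

end Ultrapower

theorem no_symmetric_cut_of_chain_condition_general
    {ι : Type} (D : Ultrafilter ι)
    (lam : Cardinal) (hlam : lam.IsRegular)
    (hstar : ∀ c : lam.ord.ToType → lam.ord.ToType → Set ι,
      (∀ a b, a < b → c a b ∈ D) →
      ∃ u : Finset (Set ι), (∀ A ∈ u, A ∈ D) ∧
        ∃ S : Set lam.ord.ToType, #S = lam ∧
          ∀ a ∈ S, ∀ b ∈ S, a < b →
            ∃ (n : ℕ) (γ : Fin (n + 1) → lam.ord.ToType), StrictMono γ ∧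
              γ 0 = a ∧ γ (Fin.last n) = b ∧
              ∀ l : Fin n, c (γ l.castSucc) (γ l.succ) ∈ u)
    (J : Type) [LinearOrder J]
    (hsat : SatPlus lam J) :
    ∀ f g : lam.ord.ToType → ι → J, ¬RepCut D f g := by
  intro f g hcut
  obtain ⟨u, huD, S, hS, hchain⟩ :=
    hstar (fun a b => {i | Interlocked (f · i) (g · i) a b}) fun _ _ => hcut.setOf_interlocked_mem
  have hA : ⋂₀ (u : Set (Set ι)) ∈ D := (Filter.sInter_mem u.finite_toSet).2 huD
  have hSunbdd : ¬BddAbove S := not_bddAbove_of_mk_eq hlam.aleph0_le hS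
  have hinterlocked : ∀ i ∈ ⋂₀ (u : Set (Set ι)), ∀ a ∈ S, ∀ b ∈ S, a < b →
      Interlocked (f · i) (g · i) a b := by
    intro i hi a ha b hb hab
    obtain ⟨n, γ, -, h0, hlast, hγ⟩ := hchain a ha b hb hab
    exact rel_of_fin_chain hab.ne h0 hlast fun l => hi _ (hγ l)
  have hbetween : ∀ i ∈ ⋂₀ (u : Set (Set ι)),
      ∃ t : J, (∀ a ∈ S, f a i < t) ∧ ∀ b ∈ S, t < g b i := fun i hi =>
    hsat.exists_between_image hS.le hS.le fun _ ha _ hb =>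
      lt_of_interlocked_of_not_bddAbove hSunbdd (hinterlocked i hi) ha hb
  have := hsat.nonempty
  choose! t hft htg using hbetween
  exact hcut.not_exists_between_of_not_bddAbove hSunbdd hSunbdd
    ⟨t, fun a ha => ltD_of_forall_mem hA fun i hi => hft i hi a ha,
      fun b hb => ltD_of_forall_mem hA fun i hi => htg i hi b hb⟩

/-- Theorem 2.22: if `λ > κ` is regular and every colouring of pairs from `λ`
by members of `D` admits a finite set `u ⊆ D` and a set `S ⊆ λ` of size `λ` through which
any two points of `S` are linked by a finite `<`-chain with colours in `u`, then for every
`λ⁺`-saturated dense linear order `J` without endpoints, no pair of sequences represents a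
`(λ, λ)`-cut of `J^κ/D`. -/
theorem no_symmetric_cut_of_chain_condition
    {ι : Type} [Infinite ι] (D : Ultrafilter ι) (hD : Nonprincipal D)
    (lam : Cardinal) (hlam : lam.IsRegular) (hκlam : #ι < lam)
    (hstar : ∀ c : lam.ord.ToType → lam.ord.ToType → Set ι,
      (∀ a b, a < b → c a b ∈ D) →
      ∃ u : Finset (Set ι), (∀ A ∈ u, A ∈ D) ∧
        ∃ S : Set lam.ord.ToType, #S = lam ∧
          ∀ a ∈ S, ∀ b ∈ S, a < b →
            ∃ (n : ℕ) (γ : Fin (n + 1) → lam.ord.ToType), StrictMono γ ∧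
              γ 0 = a ∧ γ (Fin.last n) = b ∧
              ∀ l : Fin n, c (γ l.castSucc) (γ l.succ) ∈ u)
    (J : Type) [LinearOrder J] [DenselyOrdered J] [NoMinOrder J] [NoMaxOrder J] [Nonempty J]
    (hsat : SatPlus lam J) :
    ∀ f g : lam.ord.ToType → ι → J, ¬RepCut D f g :=
  no_symmetric_cut_of_chain_condition_general D lam hlam hstar J hsat
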